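/- arXiv:1202.6437 — 2 statements merged into one kernel-verified Lean document; each statement's English description precedes it below -/
import Mathlib

section
/- Let H be a group with a length function ℓ, A the free abelian group with basis { a_h : h ∈ H, h ≠ 1 }, V = A ≀ H the restricted wreath product, and V W̄r ℤ the unrestricted wreath product of V by the infinite cyclic group ℤ generated by t. For each non-trivial h ∈ H, define functions f_{1,h}, f_{2,h} : ℤ → V in the base of V W̄r ℤ by f_{1,h}(n) = 1 for n ≤ 0 and f_{1,h}(n) = a_h^{ℓ(h)} h for n > 0, and f_{2,h}(n) = 1 for n ≤ 0 and f_{2,h}(n) = a_h for n > 0. Let U = { f_{1,h}, f_{2,h} : h ∈ H, h ≠ 1 }, Z = U ∪ {t}, and K = ⟨Z⟩ ≤ V W̄r ℤ. Identifying each v ∈ V with the element of the base of V W̄r ℤ taking value v at 0 and 1 elsewhere (so that a_h^{ℓ(h)} h = [t, f_{1,h}] and a_h = [t, f_{2,h}] lie in K, and H ≤ V ≤ K), one has ℓ(h) ≤ |h|_Z for every h ∈ H. -/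
/-- `ℓ` is a length function on the group `H`. -/
def IsLengthFunction {H : Type*} [Group H] (ℓ : H → ℕ) : Prop :=
  (∀ h : H, ℓ h = 0 ↔ h = 1) ∧ (∀ h : H, ℓ h⁻¹ = ℓ h) ∧ ∀ g h : H, ℓ (g * h) ≤ ℓ g + ℓ h

/-- The word length of `g` with respect to a generating set `X`: the least length of a word in
`X ∪ X⁻¹` representing `g`. -/
noncomputable def wordLength {G : Type*} [Group G] (X : Set G) (g : G) : ℕ :=
  sInf {n | ∃ l : List G, l.length = n ∧ (∀ x ∈ l, x ∈ X ∨ x⁻¹ ∈ X) ∧ l.prod = g}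

/-- The additive automorphism of the base `H →₀ A` of a wreath product given by right
translation of the domain: `(b ∘ f)(x) = f (x * b)`. -/
noncomputable def wreathShift {H : Type*} [Group H] {A : Type*} [AddCommGroup A] (b : H) :
    (H →₀ A) ≃+ (H →₀ A) := Finsupp.domCongr (Equiv.mulRight b).symm

@[simp] theorem wreathShift_apply {H : Type*} [Group H] {A : Type*} [AddCommGroup A]
    (b : H) (f : H →₀ A) (x : H) : wreathShift b f x = f (x * b) := by
  simp [wreathShift, Finsupp.domCongr_apply]

/-- The action of `H` on the (multiplicative) base of the wreath product `A ≀ H`. -/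
noncomputable def wreathAction (H : Type*) [Group H] (A : Type*) [AddCommGroup A] :
    H →* MulAut (Multiplicative (H →₀ A)) where
  toFun b := AddEquiv.toMultiplicative (wreathShift b)
  map_one' := by
    refine MulEquiv.ext fun f => ?_
    refine Finsupp.ext fun x => ?_
    show Finsupp.equivMapDomain (Equiv.mulRight (1 : H)).symm (Multiplicative.toAdd f) x
        = (Multiplicative.toAdd f) x
    simp [Finsupp.equivMapDomain_apply]
  map_mul' := by
    intro a b
    refine MulEquiv.ext fun f => ?_
    refine Finsupp.ext fun x => ?_
    show Finsupp.equivMapDomain (Equiv.mulRight (a * b)).symm (Multiplicative.toAdd f) x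
        = Finsupp.equivMapDomain (Equiv.mulRight a).symm
            (Finsupp.equivMapDomain (Equiv.mulRight b).symm (Multiplicative.toAdd f)) x
    simp [Finsupp.equivMapDomain_apply, mul_assoc]

/-- The wreath product `A ≀ H` of an additive abelian group `A` (the lamp group, written
multiplicatively) by a group `H`, realized as a semidirect product of the base
`H →₀ A` by `H`. -/
noncomputable def WreathProd (A : Type*) [AddCommGroup A] (H : Type*) [Group H] :=
  (Multiplicative (H →₀ A)) ⋊[wreathAction H A] H

noncomputable instance (A : Type*) [AddCommGroup A] (H : Type*) [Group H] :
    Group (WreathProd A H) :=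
  inferInstanceAs (Group ((Multiplicative (H →₀ A)) ⋊[wreathAction H A] H))

/-- The embedding of the base into the wreath product. -/
noncomputable def wreathBase {A : Type*} [AddCommGroup A] {H : Type*} [Group H]
    (w : H →₀ A) : WreathProd A H :=
  SemidirectProduct.inl (Multiplicative.ofAdd w)

/-- The embedding of `H` into the wreath product. -/
noncomputable def wreathRight {A : Type*} [AddCommGroup A] {H : Type*} [Group H]
    (h : H) : WreathProd A H :=
  SemidirectProduct.inr h

/-- The wreath product `V = A ≀ H` where `A` is the free abelian group with basis
`{a_h : h ∈ H \ {1}}`. -/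
noncomputable abbrev WreathV (H : Type*) [Group H] : Type _ :=
  WreathProd ({h : H // h ≠ 1} →₀ ℤ) H

/-- The basis element `a_h` of the base of `V`, raised to the power `m`. -/
noncomputable def aPow {H : Type*} [Group H] (h : H) (hh : h ≠ 1) (m : ℤ) : WreathV H :=
  wreathBase (Finsupp.single (1 : H) (Finsupp.single (⟨h, hh⟩ : {h : H // h ≠ 1}) m))

/-- The shift automorphism `f ↦ f(· + b)` of the base of the unrestricted wreath product
`V W̄r ℤ`, corresponding to `(b ∘ f)(x) = f(x + b)`. -/
def shiftAut (V : Type*) [Group V] (b : ℤ) : MulAut (ℤ → V) where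
  toFun f := fun x => f (x + b)
  invFun f := fun x => f (x - b)
  left_inv f := by funext x; simp
  right_inv f := by funext x; simp
  map_mul' f g := rfl

/-- The action of `ℤ` on the base of the unrestricted wreath product `V W̄r ℤ`. -/
def shiftHom (V : Type*) [Group V] : Multiplicative ℤ →* MulAut (ℤ → V) where
  toFun b := shiftAut V (Multiplicative.toAdd b)
  map_one' := by
    refine MulEquiv.ext fun f => ?_
    funext x
    simp [shiftAut]
  map_mul' a b := by
    refine MulEquiv.ext fun f => ?_
    funext x
    simp [shiftAut, add_assoc]

/-- The unrestricted wreath product `V W̄r ℤ`, with base all functions `ℤ → V`. -/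
abbrev UnrestrictedWreathZ (V : Type*) [Group V] : Type _ :=
  (ℤ → V) ⋊[shiftHom V] Multiplicative ℤ

/-- The element `a_h^{ℓ(h)} h ∈ V`. -/
noncomputable def vA {H : Type*} [Group H] (ℓ : H → ℕ) (h : H) (hh : h ≠ 1) : WreathV H :=
  aPow h hh (ℓ h : ℤ) * wreathRight h

/-- The element `a_h ∈ V`. -/
noncomputable def vB {H : Type*} [Group H] (h : H) (hh : h ≠ 1) : WreathV H :=
  aPow h hh 1

/-- The function `f_{1,h} : ℤ → V`, equal to `1` on `n ≤ 0` and to `a_h^{ℓ(h)} h` on `n > 0`. -/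
noncomputable def fOne {H : Type*} [Group H] (ℓ : H → ℕ) (h : H) (hh : h ≠ 1) :
    ℤ → WreathV H :=
  fun n => if n ≤ 0 then 1 else vA ℓ h hh

/-- The function `f_{2,h} : ℤ → V`, equal to `1` on `n ≤ 0` and to `a_h` on `n > 0`. -/
noncomputable def fTwo {H : Type*} [Group H] (h : H) (hh : h ≠ 1) : ℤ → WreathV H :=
  fun n => if n ≤ 0 then 1 else vB h hh

/-- The generator `t` of the acting copy of `ℤ`. -/
def tGen {V : Type*} [Group V] : UnrestrictedWreathZ V :=
  SemidirectProduct.inr (Multiplicative.ofAdd (1 : ℤ))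

/-- The generating set `Z = U₁ ∪ U₂ ∪ {t}` of `K ≤ V W̄r ℤ`. -/
noncomputable def genSetZ {H : Type*} [Group H] (ℓ : H → ℕ) :
    Set (UnrestrictedWreathZ (WreathV H)) :=
  {z | ∃ (h : H) (hh : h ≠ 1), z = SemidirectProduct.inl (fOne ℓ h hh)} ∪
    {z | ∃ (h : H) (hh : h ≠ 1), z = SemidirectProduct.inl (fTwo h hh)} ∪
    {tGen}

/-- The identification of `v ∈ V` with the element of the base of `V W̄r ℤ` taking the value `v`
at `0` and `1` elsewhere. -/
noncomputable def embedV {H : Type*} [Group H] (v : WreathV H) :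
    UnrestrictedWreathZ (WreathV H) :=
  SemidirectProduct.inl (fun n => if n = 0 then v else 1)

open scoped commutatorElement

/-! Fix a length function `ℓ`. On `V = A ≀ H` put the potential `Ψ(x) = ℓ(cursor x) + Σ` (lamp
weights), where a lamp `a_g` at position `p` weighs `(ℓ(p⁻¹) - ℓ(p⁻¹g)) / ℓ(g)`. These weights make
`Ψ` invariant under right multiplication by `a_g^{ℓ(g)} g`, while right multiplication by `a_g`
changes `Ψ` by at most `1` by the triangle inequality for `ℓ`. Every coordinate of an element of `Z`
is `1`, `a_g^{ℓ(g)} g` or `a_g`, so `y ↦ Ψ(y(0))` changes by at most `1` under right multiplication by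
a letter of `Z ∪ Z⁻¹`. As `Ψ(1) = 0` and `Ψ(h) = ℓ(h)`, this gives `ℓ(h) ≤ |h|_Z`. -/

open SemidirectProduct

section WordLength

variable {G : Type*} [Group G] {X : Set G}

theorem exists_list_length_eq_wordLength {g : G} (hg : g ∈ Subgroup.closure X) :
    ∃ l : List G, l.length = wordLength X g ∧ (∀ x ∈ l, x ∈ X ∨ x⁻¹ ∈ X) ∧ l.prod = g := by
  rw [← Subgroup.mem_toSubmonoid, Subgroup.closure_toSubmonoid] at hg
  obtain ⟨l, hl, rfl⟩ := Submonoid.exists_list_of_mem_closure hg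
  exact Nat.sInf_mem (s := {n | ∃ l' : List G, l'.length = n ∧ (∀ x ∈ l', x ∈ X ∨ x⁻¹ ∈ X) ∧
    l'.prod = l.prod}) ⟨l.length, l, rfl, hl, rfl⟩

theorem abs_mul_prod_sub_le_length {F : G → ℝ}
    (hF : ∀ y, ∀ z ∈ X, |F (y * z) - F y| ≤ 1) (l : List G) (hl : ∀ x ∈ l, x ∈ X ∨ x⁻¹ ∈ X)
    (y : G) : |F (y * l.prod) - F y| ≤ l.length := by
  induction l generalizing y with
  | nil => simp
  | cons z l ih =>
    have hz : |F (y * z) - F y| ≤ 1 := by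
      rcases hl z List.mem_cons_self with hz | hz
      · exact hF y z hz
      · simpa [abs_sub_comm] using hF (y * z) z⁻¹ hz
    have hrest := ih (fun x hx => hl x (List.mem_cons_of_mem z hx)) (y * z)
    rw [List.prod_cons, ← mul_assoc, List.length_cons, Nat.cast_succ]
    calc |F (y * z * l.prod) - F y|
        ≤ |F (y * z * l.prod) - F (y * z)| + |F (y * z) - F y| := abs_sub_le _ _ _
      _ ≤ l.length + 1 := add_le_add hrest hz

theorem abs_sub_le_wordLength {F : G → ℝ} (hF : ∀ y, ∀ z ∈ X, |F (y * z) - F y| ≤ 1) {g : G}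
    (hg : g ∈ Subgroup.closure X) : |F g - F 1| ≤ wordLength X g := by
  obtain ⟨l, hlen, hl, rfl⟩ := exists_list_length_eq_wordLength hg
  simpa [← hlen] using abs_mul_prod_sub_le_length hF l hl 1

end WordLength

theorem IsLengthFunction.abs_sub_le {H : Type*} [Group H] {ℓ : H → ℕ} (hℓ : IsLengthFunction ℓ)
    (r g : H) : |(ℓ (r * g) : ℝ) - ℓ r| ≤ ℓ g := by
  obtain ⟨-, hinv, hmul⟩ := hℓ
  have h₁ : (ℓ (r * g) : ℝ) ≤ ℓ r + ℓ g := mod_cast hmul r g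
  have h₂ : (ℓ r : ℝ) ≤ ℓ (r * g) + ℓ g := mod_cast (by simpa [hinv] using hmul (r * g) g⁻¹)
  rw [abs_sub_le_iff]
  constructor <;> linarith

namespace WreathProd

variable {A : Type*} [AddCommGroup A] {H : Type*} [Group H]

def lamps (x : WreathProd A H) : H →₀ A :=
  Multiplicative.toAdd (SemidirectProduct.left (φ := wreathAction H A) x)

def cursor (x : WreathProd A H) : H := SemidirectProduct.right (φ := wreathAction H A) x

theorem lamps_mul (x y : WreathProd A H) :
    (x * y).lamps = x.lamps + wreathShift x.cursor y.lamps := rfl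

theorem cursor_mul (x y : WreathProd A H) : (x * y).cursor = x.cursor * y.cursor := rfl

@[simp] theorem lamps_one : (1 : WreathProd A H).lamps = 0 := rfl
@[simp] theorem cursor_one : (1 : WreathProd A H).cursor = 1 := rfl
@[simp] theorem lamps_wreathBase (w : H →₀ A) : (wreathBase w).lamps = w := rfl
@[simp] theorem cursor_wreathBase (w : H →₀ A) : (wreathBase w).cursor = 1 := rfl
@[simp] theorem lamps_wreathRight (h : H) : (wreathRight h : WreathProd A H).lamps = 0 := rfl
@[simp] theorem cursor_wreathRight (h : H) : (wreathRight h : WreathProd A H).cursor = h := rfl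

end WreathProd

theorem wreathShift_single {A : Type*} [AddCommGroup A] {H : Type*} [Group H] (b q : H) (a : A) :
    wreathShift b (Finsupp.single q a) = Finsupp.single (q * b⁻¹) a := by
  simp [wreathShift, Finsupp.domCongr_apply, Finsupp.equivMapDomain_single]

theorem wreathBase_zsmul {A : Type*} [AddCommGroup A] {H : Type*} [Group H] (m : ℤ) (w : H →₀ A) :
    wreathBase (m • w) = wreathBase w ^ m := by
  rw [wreathBase, wreathBase, ofAdd_zsmul, map_zpow]
  rfl

theorem wreathRight_one {A : Type*} [AddCommGroup A] {H : Type*} [Group H] :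
    (wreathRight 1 : WreathProd A H) = 1 := map_one _

section Potential

variable {H : Type*} [Group H] (ℓ : H → ℕ)

noncomputable def lampWeight : (H →₀ ({g : H // g ≠ 1} →₀ ℤ)) →+ ℝ :=
  Finsupp.liftAddHom fun p => Finsupp.liftAddHom fun g =>
    zmultiplesHom ℝ (((ℓ p⁻¹ : ℝ) - ℓ (p⁻¹ * g)) / ℓ g)

theorem lampWeight_single_single (p : H) (g : {g : H // g ≠ 1}) (m : ℤ) :
    lampWeight ℓ (Finsupp.single p (Finsupp.single g m)) =
      m * (((ℓ p⁻¹ : ℝ) - ℓ (p⁻¹ * g)) / ℓ g) := by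
  rw [lampWeight, Finsupp.liftAddHom_apply_single, Finsupp.liftAddHom_apply_single,
    zmultiplesHom_apply, zsmul_eq_mul]

noncomputable def potential (x : WreathV H) : ℝ := ℓ x.cursor + lampWeight ℓ x.lamps

theorem potential_mul_aPow (x : WreathV H) (g : H) (hg : g ≠ 1) (m : ℤ) :
    potential ℓ (x * aPow g hg m) =
      potential ℓ x + m * (((ℓ x.cursor : ℝ) - ℓ (x.cursor * g)) / ℓ g) := by
  rw [potential, potential, WreathProd.cursor_mul, WreathProd.lamps_mul, aPow,
    WreathProd.cursor_wreathBase, WreathProd.lamps_wreathBase, mul_one, wreathShift_single,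
    one_mul, map_add, lampWeight_single_single, inv_inv, add_assoc]

theorem potential_mul_wreathRight (x : WreathV H) (g : H) :
    potential ℓ (x * wreathRight g) = potential ℓ x + (ℓ (x.cursor * g) - ℓ x.cursor) := by
  rw [potential, potential, WreathProd.cursor_mul, WreathProd.lamps_mul,
    WreathProd.cursor_wreathRight, WreathProd.lamps_wreathRight, map_zero, add_zero]
  ring

variable {ℓ}

theorem potential_mul_vA (hℓ : IsLengthFunction ℓ) (x : WreathV H) (g : H) (hg : g ≠ 1) :
    potential ℓ (x * vA ℓ g hg) = potential ℓ x := by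
  have hℓg : (ℓ g : ℝ) ≠ 0 := mod_cast mt (hℓ.1 g).1 hg
  rw [vA, ← mul_assoc, potential_mul_wreathRight, potential_mul_aPow, WreathProd.cursor_mul]
  simp only [aPow, WreathProd.cursor_wreathBase, mul_one]
  field_simp
  push_cast
  ring

theorem abs_potential_mul_vB_sub_le (hℓ : IsLengthFunction ℓ) (x : WreathV H) (g : H)
    (hg : g ≠ 1) : |potential ℓ (x * vB g hg) - potential ℓ x| ≤ 1 := by
  have hℓg : (0 : ℝ) < ℓ g := mod_cast Nat.pos_of_ne_zero (mt (hℓ.1 g).1 hg)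
  rw [vB, potential_mul_aPow, add_sub_cancel_left, Int.cast_one, one_mul, abs_div,
    abs_of_pos hℓg, div_le_one hℓg, abs_sub_comm]
  exact hℓ.abs_sub_le _ _

theorem potential_wreathRight (h : H) : potential ℓ (wreathRight h) = ℓ h := by
  simp [potential]

theorem potential_one (hℓ : IsLengthFunction ℓ) : potential ℓ 1 = 0 := by
  simp [potential, (hℓ.1 1).2 rfl]

end Potential

theorem Subgroup.commutatorElement_mem {G : Type*} [Group G] (K : Subgroup G) {a b : G}
    (ha : a ∈ K) (hb : b ∈ K) : ⁅a, b⁆ ∈ K := by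
  rw [commutatorElement_def]
  exact mul_mem (mul_mem (mul_mem ha hb) (inv_mem ha)) (inv_mem hb)

section UnrestrictedWreathZ

variable {V : Type*} [Group V]

theorem UnrestrictedWreathZ.left_mul_apply (y z : UnrestrictedWreathZ V) (n : ℤ) :
    (y * z).left n = y.left n * z.left (n + Multiplicative.toAdd y.right) := rfl

theorem commutatorElement_tGen_inl (f : ℤ → V) :
    ⁅(tGen : UnrestrictedWreathZ V), inl f⁆ =
      (inl (fun n => f (n + 1) * (f n)⁻¹) : UnrestrictedWreathZ V) := by
  rw [commutatorElement_def, tGen, ← map_inv, ← inl_aut, ← map_inv, ← map_mul]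
  rfl

theorem commutatorElement_tGen_inl_ite (v : V) :
    ⁅(tGen : UnrestrictedWreathZ V), inl (fun n => if n ≤ 0 then 1 else v)⁆ =
      (inl (fun n => if n = 0 then v else 1) : UnrestrictedWreathZ V) := by
  rw [commutatorElement_tGen_inl]
  congr 1
  funext n
  rcases lt_trichotomy n 0 with hn | rfl | hn
  · simp [hn.ne, hn.le, Int.add_one_le_iff.2 hn]
  · simp
  · simp [hn.ne', not_le.2 hn, not_le.2 (hn.trans (lt_add_one n))]

end UnrestrictedWreathZ

section Generators

variable {H : Type*} [Group H]

theorem embedV_eq_inl_mulSingle (v : WreathV H) : embedV v = inl (Pi.mulSingle 0 v) :=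
  congrArg inl (funext fun n => (Pi.mulSingle_apply 0 v n).symm)

theorem embedV_left_zero (v : WreathV H) : (embedV v).left 0 = v := by
  simp [embedV]

theorem embedV_one : embedV (1 : WreathV H) = 1 := by
  rw [embedV_eq_inl_mulSingle, Pi.mulSingle_one, map_one]

theorem embedV_mul (v w : WreathV H) : embedV (v * w) = embedV v * embedV w := by
  simp only [embedV_eq_inl_mulSingle, Pi.mulSingle_mul, map_mul]

theorem embedV_zpow (v : WreathV H) (m : ℤ) : embedV (v ^ m) = embedV v ^ m := by
  simp only [embedV_eq_inl_mulSingle, ← map_zpow, Pi.mulSingle_zpow]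

theorem aPow_eq_vB_zpow (g : H) (hg : g ≠ 1) (m : ℤ) : aPow g hg m = vB g hg ^ m := by
  rw [vB, aPow, aPow, ← wreathBase_zsmul, Finsupp.smul_single, Finsupp.smul_single, smul_eq_mul,
    mul_one]

theorem wreathRight_eq_vB_zpow_mul_vA (ℓ : H → ℕ) (h : H) (hh : h ≠ 1) :
    (wreathRight h : WreathV H) = vB h hh ^ (-(ℓ h : ℤ)) * vA ℓ h hh := by
  rw [vA, aPow_eq_vB_zpow, zpow_neg, inv_mul_cancel_left]

theorem commutatorElement_tGen_fOne (ℓ : H → ℕ) (h : H) (hh : h ≠ 1) :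
    ⁅(tGen : UnrestrictedWreathZ (WreathV H)), inl (fOne ℓ h hh)⁆ = embedV (vA ℓ h hh) :=
  commutatorElement_tGen_inl_ite _

theorem commutatorElement_tGen_fTwo (h : H) (hh : h ≠ 1) :
    ⁅(tGen : UnrestrictedWreathZ (WreathV H)), inl (fTwo h hh)⁆ = embedV (vB h hh) :=
  commutatorElement_tGen_inl_ite _

theorem embedV_wreathRight_mem_closure (ℓ : H → ℕ) (h : H) :
    embedV (wreathRight h : WreathV H) ∈ Subgroup.closure (genSetZ ℓ) := by
  by_cases hh : h = 1
  · rw [hh, wreathRight_one, embedV_one]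
    exact one_mem _
  have hmem {z} (hz : z ∈ genSetZ ℓ) := Subgroup.subset_closure hz
  have ht : tGen ∈ genSetZ ℓ := Or.inr rfl
  have h₁ := (Subgroup.closure (genSetZ ℓ)).commutatorElement_mem (hmem ht)
    (hmem (Or.inl (Or.inl ⟨h, hh, rfl⟩)))
  have h₂ := (Subgroup.closure (genSetZ ℓ)).commutatorElement_mem (hmem ht)
    (hmem (Or.inl (Or.inr ⟨h, hh, rfl⟩)))
  rw [commutatorElement_tGen_fOne] at h₁
  rw [commutatorElement_tGen_fTwo] at h₂
  rw [wreathRight_eq_vB_zpow_mul_vA ℓ h hh, embedV_mul, embedV_zpow]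
  exact mul_mem (zpow_mem h₂ _) h₁

theorem left_apply_of_mem_genSetZ {ℓ : H → ℕ} {z : UnrestrictedWreathZ (WreathV H)}
    (hz : z ∈ genSetZ ℓ) (n : ℤ) :
    z.left n = 1 ∨ ∃ g hg, z.left n = vA ℓ g hg ∨ z.left n = vB g hg := by
  rcases hz with (⟨g, hg, rfl⟩ | ⟨g, hg, rfl⟩) | rfl
  · rw [left_inl, fOne]
    split_ifs
    exacts [Or.inl rfl, Or.inr ⟨g, hg, Or.inl rfl⟩]
  · rw [left_inl, fTwo]
    split_ifs
    exacts [Or.inl rfl, Or.inr ⟨g, hg, Or.inr rfl⟩]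
  · exact Or.inl rfl

theorem abs_potential_left_mul_sub_le {ℓ : H → ℕ}
    (hℓ : IsLengthFunction ℓ) (y z : UnrestrictedWreathZ (WreathV H)) (hz : z ∈ genSetZ ℓ) :
    |potential ℓ ((y * z).left 0) - potential ℓ (y.left 0)| ≤ 1 := by
  rw [UnrestrictedWreathZ.left_mul_apply]
  rcases left_apply_of_mem_genSetZ hz (0 + Multiplicative.toAdd y.right) with
    hz₀ | ⟨g, hg, hz₀ | hz₀⟩ <;> rw [hz₀]
  · simp
  · simp [potential_mul_vA hℓ]
  · exact abs_potential_mul_vB_sub_le hℓ _ g hg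

end Generators

/-- Under the identifications `a_h^{ℓ(h)}h = [t, f_{1,h}]`, `a_h = [t, f_{2,h}]` (so that
`H ≤ V ≤ K = ⟨Z⟩`), one has `ℓ(h) ≤ |h|_Z` for every `h ∈ H`. -/
theorem length_le_wordLength_Z {H : Type} [Group H] (ℓ : H → ℕ)
    (hℓ : IsLengthFunction ℓ) :
    (∀ (h : H) (hh : h ≠ 1),
      ⁅(tGen : UnrestrictedWreathZ (WreathV H)), SemidirectProduct.inl (fOne ℓ h hh)⁆ =
          embedV (vA ℓ h hh) ∧
      ⁅(tGen : UnrestrictedWreathZ (WreathV H)), SemidirectProduct.inl (fTwo h hh)⁆ =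
          embedV (vB h hh)) ∧
    (∀ h : H, embedV (wreathRight h : WreathV H) ∈ Subgroup.closure (genSetZ ℓ)) ∧
    ∀ h : H, ℓ h ≤ wordLength (genSetZ ℓ) (embedV (wreathRight h : WreathV H)) := by
  refine ⟨fun h hh => ⟨commutatorElement_tGen_fOne ℓ h hh, commutatorElement_tGen_fTwo h hh⟩,
    embedV_wreathRight_mem_closure ℓ, fun h => ?_⟩
  have key := abs_sub_le_wordLength (X := genSetZ ℓ)
    (F := fun y : UnrestrictedWreathZ (WreathV H) => potential ℓ (y.left 0))
    (abs_potential_left_mul_sub_le hℓ) (embedV_wreathRight_mem_closure ℓ h)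
  simp only [embedV_left_zero, one_left, Pi.one_apply, potential_wreathRight, potential_one hℓ,
    sub_zero, Nat.abs_cast] at key
  exact_mod_cast key
end

section
/- Let G be a group generated by a finite set X and let (G_k)_{k≥1} be a sequence of quotient groups of G, each equipped with the word metric d_k with respect to the image of X. Let H be the restricted direct product ⨁_{k≥1} G_k (the subgroup of ∏_{k≥1} G_k of elements with all but finitely many coordinates trivial), and for h = (g_k) ∈ H define ℓ(h) = Σ_{k=1}^∞ k·d_k(1, g_k). Then ℓ is a length function on H and the growth of H with respect to ℓ is at most exponential. -/
/-- The growth of `H` with respect to `ℓ` is at most exponential: there is a constant `a`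
such that the ball of radius `n` is finite of cardinality at most `a ^ n`. -/
def AtMostExponentialGrowth {H : Type*} [Group H] (ℓ : H → ℕ) : Prop :=
  ∃ a : ℕ, ∀ n : ℕ, {h : H | ℓ h ≤ n}.Finite ∧ Nat.card {h : H | ℓ h ≤ n} ≤ a ^ n

/-- The restricted direct product `⨁_k Q_k`: the subgroup of `∏_k Q_k` of elements with all but
finitely many coordinates trivial. -/
def restrictedProd (Q : ℕ → Type*) [∀ k, Group (Q k)] : Subgroup (∀ k, Q k) where
  carrier := {h | {k | h k ≠ 1}.Finite}
  one_mem' := by simp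
  mul_mem' := by
    intro a b ha hb
    refine (ha.union hb).subset fun k hk => ?_
    by_contra hc
    simp only [Set.mem_union, Set.mem_setOf_eq, not_or, not_not] at hc
    exact hk (by simp [hc.1, hc.2])
  inv_mem' := by
    intro a ha
    refine ha.subset fun k hk => ?_
    simpa using hk

/-- The length function `ℓ(h) = Σ_k (k+1) · d_k(1, h_k)` on the restricted product, where `d_k`
is the word metric of `Q_k` with respect to the generating set `X k`. -/
noncomputable def restrictedLength (Q : ℕ → Type*) [∀ k, Group (Q k)]
    (X : ∀ k, Set (Q k)) (h : ↥(restrictedProd Q)) : ℕ :=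
  ∑ᶠ k, (k + 1) * wordLength (X k) ((h : ∀ k, Q k) k)

/-!
Since each `d_k` is a word metric, `ℓ` is a positively weighted sum of length functions, almost
all of them zero. For the growth bound, `ℓ h ≤ n` forces `h_k = 1` for `k > n` and
`Σ_{k ≤ n} d_k(1, h_k) ≤ n`. Lifting geodesic words for `h_0, …, h_n` to words in `X ∪ X⁻¹` and
joining them with a separator letter gives a single word of length at most `2n` over a fixed
finite alphabet, and this word determines `h`; so the ball of radius `n` has at most
`(|X ∪ X⁻¹| + 2) ^ (2n)` elements.
-/

open scoped Pointwise

section WordLength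

variable {G : Type*} [Group G] {X : Set G} {g h : G}

theorem wordLength_le_length {l : List G} (hl : ∀ x ∈ l, x ∈ X ∨ x⁻¹ ∈ X) (hg : l.prod = g) :
    wordLength X g ≤ l.length :=
  Nat.sInf_le ⟨l, rfl, hl, hg⟩

theorem wordLength_one : wordLength X (1 : G) = 0 :=
  Nat.le_zero.mp (wordLength_le_length (l := []) (by simp) rfl)

theorem exists_word_length_eq_wordLength (hg : g ∈ Subgroup.closure X) :
    ∃ l : List G, l.length = wordLength X g ∧ (∀ x ∈ l, x ∈ X ∨ x⁻¹ ∈ X) ∧ l.prod = g := by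
  rw [← Subgroup.mem_toSubmonoid, Subgroup.closure_toSubmonoid] at hg
  obtain ⟨l, hl, hprod⟩ := Submonoid.exists_list_of_mem_closure hg
  exact Nat.sInf_mem
    (s := {n | ∃ l : List G, l.length = n ∧ (∀ x ∈ l, x ∈ X ∨ x⁻¹ ∈ X) ∧ l.prod = g})
    ⟨l.length, l, rfl, hl, hprod⟩

theorem wordLength_eq_zero_iff (hg : g ∈ Subgroup.closure X) :
    wordLength X g = 0 ↔ g = 1 := by
  refine ⟨fun h0 => ?_, fun h1 => h1 ▸ wordLength_one⟩
  obtain ⟨l, hlen, -, rfl⟩ := exists_word_length_eq_wordLength hg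
  rw [h0, List.length_eq_zero_iff] at hlen
  simp [hlen]

theorem wordLength_inv_le (hg : g ∈ Subgroup.closure X) :
    wordLength X g⁻¹ ≤ wordLength X g := by
  obtain ⟨l, hlen, hl, rfl⟩ := exists_word_length_eq_wordLength hg
  rw [← hlen, List.prod_inv_reverse]
  refine (wordLength_le_length (fun x hx => ?_) rfl).trans_eq (by simp)
  obtain ⟨y, hy, rfl⟩ := List.mem_map.mp (List.mem_reverse.mp hx)
  simpa [or_comm] using hl y hy

theorem wordLength_inv (hg : g ∈ Subgroup.closure X) : wordLength X g⁻¹ = wordLength X g :=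
  (wordLength_inv_le hg).antisymm (by simpa using wordLength_inv_le (inv_mem hg))

theorem wordLength_mul_le (hg : g ∈ Subgroup.closure X) (hh : h ∈ Subgroup.closure X) :
    wordLength X (g * h) ≤ wordLength X g + wordLength X h := by
  obtain ⟨l₁, hlen₁, hl₁, rfl⟩ := exists_word_length_eq_wordLength hg
  obtain ⟨l₂, hlen₂, hl₂, rfl⟩ := exists_word_length_eq_wordLength hh
  rw [← hlen₁, ← hlen₂, ← List.length_append, ← List.prod_append]
  exact wordLength_le_length (fun x hx => (List.mem_append.mp hx).elim (hl₁ x) (hl₂ x)) rfl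

theorem exists_lift_word_of_mem_closure_image {Q : Type*} [Group Q] (φ : G →* Q) {q : Q}
    (hq : q ∈ Subgroup.closure (φ '' X)) :
    ∃ w : List ↥(X ∪ X⁻¹),
      w.length = wordLength (φ '' X) q ∧ (w.map fun x => φ x.1).prod = q := by
  obtain ⟨l, hlen, hl, rfl⟩ := exists_word_length_eq_wordLength hq
  have hlift : l ∈ Set.range (List.map fun x : ↥(X ∪ X⁻¹) => φ x.1) := by
    rw [Set.range_list_map]
    intro y hy
    rcases hl y hy with ⟨x, hx, rfl⟩ | ⟨x, hx, hxy⟩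
    · exact ⟨⟨x, Or.inl hx⟩, rfl⟩
    · exact ⟨⟨x⁻¹, Or.inr (by simpa using hx)⟩, by simp [hxy]⟩
  obtain ⟨w, rfl⟩ := hlift
  exact ⟨w, by simpa using hlen, rfl⟩

end WordLength

theorem List.length_intercalate_singleton {α : Type*} (x : α) :
    ∀ {ls : List (List α)}, ls ≠ [] →
      ([x].intercalate ls).length = (ls.map List.length).sum + ls.length - 1
  | [], h => absurd rfl h
  | [l], _ => by simp
  | l :: l' :: ls, _ => by
    rw [List.intercalate_cons_of_ne_nil (List.cons_ne_nil _ _), List.length_append,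
      List.length_append, length_intercalate_singleton x (List.cons_ne_nil _ _)]
    simp only [List.map_cons, List.sum_cons, List.length_cons, List.length_nil]
    omega

section JoinWords

variable {β : Type*}

def joinWords (ws : List (List β)) : List (Option β) :=
  [none].intercalate (ws.map (List.map some))

theorem joinWords_injOn : Set.InjOn (joinWords (β := β)) {ws | ws ≠ []} := by
  classical
  have hsplit (ws : List (List β)) (hws : ws ≠ []) :
      (joinWords ws).splitOn none = ws.map (List.map some) :=
    List.splitOn_intercalate none (by simp) (by simpa using hws)
  intro ws hws ws' hws' h
  refine List.map_injective_iff.mpr (List.map_injective_iff.mpr (Option.some_injective β)) ?_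
  rw [← hsplit ws hws, ← hsplit ws' hws', h]

theorem length_joinWords {ws : List (List β)} (hws : ws ≠ []) :
    (joinWords ws).length = (ws.map List.length).sum + ws.length - 1 := by
  simp [joinWords, List.length_intercalate_singleton _ (List.map_eq_nil_iff.not.mpr hws),
    Function.comp_def]

end JoinWords

theorem Set.finite_and_natCard_le_of_injOn_list {α β : Type*} [Finite β] {s : Set α} {m : ℕ}
    (f : α → List β) (hf : s.InjOn f) (hlen : ∀ a ∈ s, (f a).length ≤ m) :
    s.Finite ∧ Nat.card s ≤ (Nat.card β + 1) ^ m := by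
  let F : s → Fin m → Option β := fun a i => (f a)[(i : ℕ)]?
  have hF : Function.Injective F := by
    intro a b hab
    refine Subtype.ext (hf a.2 b.2 (List.ext_getElem? fun i => ?_))
    rcases lt_or_ge i m with hi | hi
    · exact congrFun hab ⟨i, hi⟩
    · rw [List.getElem?_eq_none ((hlen a a.2).trans hi),
        List.getElem?_eq_none ((hlen b b.2).trans hi)]
  refine ⟨Set.finite_coe_iff.mp (Finite.of_injective F hF), ?_⟩
  calc Nat.card s ≤ Nat.card (Fin m → Option β) := Nat.card_le_card_of_injective F hF
    _ = (Nat.card β + 1) ^ m := by rw [Nat.card_fun, Finite.card_option, Nat.card_fin]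

section RestrictedProduct

variable {Q : ℕ → Type*} [∀ k, Group (Q k)] (X : ∀ k, Set (Q k))

theorem hasFiniteSupport_restrictedLength_summand (h : restrictedProd Q) :
    Function.HasFiniteSupport fun k => (k + 1) * wordLength (X k) (h.1 k) :=
  h.2.subset fun k hk hk1 => hk (by simp [hk1, wordLength_one])

theorem le_restrictedLength (h : restrictedProd Q) (k : ℕ) :
    (k + 1) * wordLength (X k) (h.1 k) ≤ restrictedLength Q X h :=
  single_le_finsum k (hasFiniteSupport_restrictedLength_summand X h) fun _ => Nat.zero_le _

theorem sum_range_wordLength_le_restrictedLength (h : restrictedProd Q) (m : ℕ) :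
    ∑ k ∈ Finset.range m, wordLength (X k) (h.1 k) ≤ restrictedLength Q X h := by
  classical
  have hfin := hasFiniteSupport_restrictedLength_summand X h
  calc ∑ k ∈ Finset.range m, wordLength (X k) (h.1 k)
      ≤ ∑ k ∈ Finset.range m, (k + 1) * wordLength (X k) (h.1 k) :=
        Finset.sum_le_sum fun k _ => Nat.le_mul_of_pos_left _ k.succ_pos
    _ ≤ ∑ k ∈ Finset.range m ∪ hfin.toFinset, (k + 1) * wordLength (X k) (h.1 k) :=
        Finset.sum_le_sum_of_subset Finset.subset_union_left
    _ = restrictedLength Q X h :=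
        (finsum_eq_sum_of_support_subset _ (by simp)).symm

theorem isLengthFunction_restrictedLength (hX : ∀ k, Subgroup.closure (X k) = ⊤) :
    IsLengthFunction (restrictedLength Q X) := by
  have mem (k : ℕ) (q : Q k) : q ∈ Subgroup.closure (X k) := by simp [hX]
  have hfin := hasFiniteSupport_restrictedLength_summand X
  refine ⟨fun h => ⟨fun h0 => ?_, ?_⟩, fun h => ?_, fun g h => ?_⟩
  · refine Subtype.ext (funext fun k => ?_)
    have := le_restrictedLength X h k
    rw [h0, Nat.le_zero, mul_eq_zero] at this
    exact (wordLength_eq_zero_iff (mem k _)).mp (this.resolve_left k.succ_ne_zero)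
  · rintro rfl
    simp [restrictedLength, wordLength_one]
  · exact finsum_congr fun k => congrArg _ (wordLength_inv (mem k _))
  · calc restrictedLength Q X (g * h)
        ≤ ∑ᶠ k, ((k + 1) * wordLength (X k) (g.1 k) +
            (k + 1) * wordLength (X k) (h.1 k)) := by
          refine finsum_le_finsum' (hfin _)
            (((hfin g).union (hfin h)).subset (Function.support_add _ _)) fun k => ?_
          rw [← mul_add]
          exact Nat.mul_le_mul_left _ (wordLength_mul_le (mem k _) (mem k _))
      _ = restrictedLength Q X g + restrictedLength Q X h := finsum_add_distrib (hfin g) (hfin h)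

theorem atMostExponentialGrowth_restrictedLength {G : Type*} [Group G] {X : Set G}
    (hX : X.Finite) (π : ∀ k, G →* Q k) (hπ : ∀ k, Subgroup.closure (π k '' X) = ⊤) :
    AtMostExponentialGrowth (restrictedLength Q fun k => π k '' X) := by
  have : Finite ↥(X ∪ X⁻¹) := (hX.union (Set.finite_inv.mpr hX)).to_subtype
  have mem (k : ℕ) (q : Q k) : q ∈ Subgroup.closure (π k '' X) := by simp [hπ]
  choose word hword_length hword_prod using fun k (q : Q k) =>
    exists_lift_word_of_mem_closure_image (π k) (mem k q)
  refine ⟨(Nat.card ↥(X ∪ X⁻¹) + 2) ^ 2, fun n => ?_⟩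
  set ℓ := restrictedLength Q fun k => π k '' X
  have eq_one_of_lt {h} (hh : ℓ h ≤ n) {k} (hk : n < k) : h.1 k = 1 := by
    have := (le_restrictedLength _ h k).trans hh
    exact (wordLength_eq_zero_iff (mem k _)).mp (by nlinarith)
  let encode (h : restrictedProd Q) : List (Option ↥(X ∪ X⁻¹)) :=
    joinWords (List.ofFn fun i : Fin (n + 1) => word i (h.1 i))
  have encode_injOn : Set.InjOn encode {h | ℓ h ≤ n} := by
    intro h hh h' hh' he
    have hwords := List.ofFn_injective (joinWords_injOn (by simp) (by simp) he)
    refine Subtype.ext (funext fun k => ?_)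
    rcases le_or_gt k n with hk | hk
    · rw [← hword_prod k (h.1 k), ← hword_prod k (h'.1 k)]
      exact congrArg _ (congrArg _ (congrFun hwords ⟨k, Nat.lt_succ_of_le hk⟩))
    · rw [eq_one_of_lt hh hk, eq_one_of_lt hh' hk]
  have encode_length : ∀ h ∈ {h | ℓ h ≤ n}, (encode h).length ≤ 2 * n := by
    intro h hh
    have := (sum_range_wordLength_le_restrictedLength _ h (n + 1)).trans hh
    rw [length_joinWords (by simp), List.map_ofFn, List.sum_ofFn, List.length_ofFn]
    simp only [Function.comp_apply, hword_length]
    rw [Fin.sum_univ_eq_sum_range (fun k => wordLength (π k '' X) (h.1 k))]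
    omega
  rw [← pow_mul]
  simpa [Finite.card_option] using
    Set.finite_and_natCard_le_of_injOn_list encode encode_injOn encode_length

end RestrictedProduct

/-- If `(Q_k)` is a sequence of quotients of a finitely generated group `G`, then
`ℓ(h) = Σ_k (k+1)·d_k(1, h_k)` is a length function on `⨁_k Q_k` of at most exponential
growth. -/
theorem restricted_product_length_function {G : Type} [Group G] (X : Finset G)
    (hX : Subgroup.closure (X : Set G) = ⊤)
    (Q : ℕ → Type) [instQ : ∀ k, Group (Q k)] (π : ∀ k, G →* Q k)
    (hπ : ∀ k, Function.Surjective (π k)) :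
    IsLengthFunction (H := ↥(restrictedProd Q))
      (restrictedLength Q (fun k => (π k) '' (X : Set G))) ∧
    AtMostExponentialGrowth (H := ↥(restrictedProd Q))
      (restrictedLength Q (fun k => (π k) '' (X : Set G))) := by
  have hgen (k : ℕ) : Subgroup.closure (π k '' X) = ⊤ := by
    rw [← MonoidHom.map_closure, hX, Subgroup.map_top_of_surjective _ (hπ k)]
  exact ⟨isLengthFunction_restrictedLength _ hgen,
    atMostExponentialGrowth_restrictedLength X.finite_toSet π hgen⟩
end
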